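/- The minimization thresholds satisfy the exact balancing identity: for every real α > 0 and every integer j with 0 ≤ j ≤ k, Σ_{i=1}^j u_i + (k − j)·U + 2β = α·(k·(u_{j+1} − 2β) + 2β). -/

import Mathlib

/-! The gaps `u_i - U` form a geometric sequence of ratio `1 + 1/(kα)`, so
`kα (u_{i+1} - u_i) = u_i - U`: raising `j` by one adds `u_{j+1} - U` to both sides of the
balancing identity, and the case `j = 0` is a direct computation. -/

open Finset

/-- DTPR-min threshold values `u_i`. -/
noncomputable def uMin (U β α : ℝ) (k : ℕ) (i : ℕ) : ℝ :=
  U * (1 - (1 - 1 / α) * (1 + 1 / ((k : ℝ) * α)) ^ (i - 1))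
    + 2 * β * (1 / ((k : ℝ) * α) - 1 / (k : ℝ) + 1) * (1 + 1 / ((k : ℝ) * α)) ^ (i - 1)

section

variable (U β α : ℝ) (k : ℕ)

theorem uMin_succ_sub_eq_mul (i : ℕ) :
    uMin U β α k (i + 1 + 1) - U = (1 + 1 / ((k : ℝ) * α)) * (uMin U β α k (i + 1) - U) := by
  simp only [uMin, Nat.add_sub_cancel]
  ring

variable {α k}

theorem mul_uMin_succ_sub_uMin (hk : k ≠ 0) (hα : α ≠ 0) (i : ℕ) :
    α * k * (uMin U β α k (i + 1 + 1) - uMin U β α k (i + 1)) = uMin U β α k (i + 1) - U := by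
  have hk' : (k : ℝ) ≠ 0 := Nat.cast_ne_zero.mpr hk
  rw [← sub_sub_sub_cancel_right _ _ U, uMin_succ_sub_eq_mul]
  field_simp
  ring

theorem uMin_one_balance (hk : k ≠ 0) (hα : α ≠ 0) :
    α * ((k : ℝ) * (uMin U β α k 1 - 2 * β) + 2 * β) = k * U + 2 * β := by
  have hk' : (k : ℝ) ≠ 0 := Nat.cast_ne_zero.mpr hk
  simp only [uMin, Nat.sub_self, pow_zero, mul_one]
  field_simp
  ring

end

theorem dtpr_min_balancing_identity_general
    (U β : ℝ) (k : ℕ) (hk : 1 ≤ k)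
    (α : ℝ) (hα : 0 < α)
    (j : ℕ) :
    (∑ i ∈ Finset.Icc 1 j, uMin U β α k i) + ((k : ℝ) - (j : ℝ)) * U + 2 * β
      = α * ((k : ℝ) * (uMin U β α k (j + 1) - 2 * β) + 2 * β) := by
  have hk0 : k ≠ 0 := Nat.one_le_iff_ne_zero.mp hk
  induction j with
  | zero => simpa using (uMin_one_balance U β hk0 hα.ne').symm
  | succ j ih =>
    rw [sum_Icc_succ_top (Nat.le_add_left 1 j), Nat.cast_succ]
    linear_combination ih - mul_uMin_succ_sub_uMin U β hk0 hα.ne' j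

/-- The exact balancing identity for the minimization thresholds: for every
`α > 0` and every `0 ≤ j ≤ k`,
`Σ_{i=1}^j u_i + (k − j)·U + 2β = α·(k·(u_{j+1} − 2β) + 2β)`. -/
theorem dtpr_min_balancing_identity
    (U β : ℝ) (k : ℕ) (hk : 1 ≤ k)
    (α : ℝ) (hα : 0 < α)
    (j : ℕ) (hj : j ≤ k) :
    (∑ i ∈ Finset.Icc 1 j, uMin U β α k i) + ((k : ℝ) - (j : ℝ)) * U + 2 * β
      = α * ((k : ℝ) * (uMin U β α k (j + 1) - 2 * β) + 2 * β) :=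
  dtpr_min_balancing_identity_general U β k hk α hα j
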